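/- Let A be a central hyperplane arrangement in K^l with defining polynomial Q(A), and let X be a flat of A (an intersection of some hyperplanes of A) with corresponding prime ideal I(X) generated by the linear forms of the hyperplanes containing X. Let A_X be the localization of A at X, i.e., the subarrangement of hyperplanes containing X. Then the Jacobian ideal of A and the Jacobian ideal of A_X generate the same ideal in the localized ring S_{I(X)}: J(A)·S_{I(X)} = J(A_X)·S_{I(X)}. -/

import Mathlib

/-!
Write `Q(A) = Q(A_X) · u`, where `u` is the product of the forms of the hyperplanes not
containing `X`. Each such form is nonzero at some point of `X`, hence lies outside `I(X)`,
so `u` is a unit in `S_{I(X)}`. By the Leibniz rule, the Jacobian ideal of `f · u` is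
contained in that of `f`, and the two agree as soon as `u` becomes a unit.
-/

open MvPolynomial

/-- The polynomial ring `S = K[x_1,...,x_l]`. -/
abbrev PolyS (K : Type*) [CommSemiring K] (l : ℕ) := MvPolynomial (Fin l) K

/-- A central hyperplane arrangement in `K^l`, given by its finite set of
(nonzero, homogeneous of degree 1) defining linear forms. -/
structure Arrangement (K : Type*) [Field K] (l : ℕ) where
  forms : Finset (PolyS K l)
  homog : ∀ f ∈ forms, MvPolynomial.IsHomogeneous f 1
  nonzero : ∀ f ∈ forms, f ≠ 0

namespace Arrangement

variable {K : Type*} [Field K] {l : ℕ}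

/-- The defining polynomial `Q(A)`. -/
noncomputable def Q (A : Arrangement K l) : PolyS K l := ∏ f ∈ A.forms, f

/-- The Jacobian ideal `J(A)`, generated by `Q(A)` and its partial derivatives. -/
noncomputable def jac (A : Arrangement K l) : Ideal (PolyS K l) :=
  Ideal.span ({A.Q} ∪ Set.range fun i : Fin l => pderiv i A.Q)

/-- The hyperplane (zero set) of a linear form. -/
def zeroSet (f : PolyS K l) : Set (Fin l → K) := {v | eval v f = 0}

/-- `X` is a flat (element of the intersection lattice `L(A)`). -/
def IsFlat (A : Arrangement K l) (X : Set (Fin l → K)) : Prop :=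
  ∃ B : Finset (PolyS K l), B ⊆ A.forms ∧ X = ⋂ f ∈ B, zeroSet f

/-- The localization `A_X` of `A` at a flat `X`: hyperplanes containing `X`. -/
noncomputable def locArr (A : Arrangement K l) (X : Set (Fin l → K)) : Arrangement K l :=
  letI : DecidablePred fun f : PolyS K l => X ⊆ zeroSet f := fun _ => Classical.propDecidable _
  { forms := A.forms.filter fun f => X ⊆ zeroSet f
    homog := fun f hf => A.homog f (Finset.mem_filter.mp hf).1
    nonzero := fun f hf => A.nonzero f (Finset.mem_filter.mp hf).1 }

/-- The ideal `I(X)` generated by the linear forms of hyperplanes containing `X`. -/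
noncomputable def flatIdeal (A : Arrangement K l) (X : Set (Fin l → K)) : Ideal (PolyS K l) :=
  Ideal.span {f | f ∈ A.forms ∧ X ⊆ zeroSet f}

/-- The coefficient (normal) vector of a linear form. -/
noncomputable def coeffVec (f : PolyS K l) : Fin l → K :=
  fun i => MvPolynomial.coeff (Finsupp.single i 1) f

/-- The rank (codimension) of a flat `X`, as the dimension of the span of the
normal vectors of the hyperplanes containing `X`. -/
noncomputable def flatRank (A : Arrangement K l) (X : Set (Fin l → K)) : ℕ :=
  Module.finrank K (Submodule.span K (coeffVec '' {f | f ∈ A.forms ∧ X ⊆ zeroSet f}))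

/-- The module `D(A)` of logarithmic derivations, viewed as the submodule of
`S^l` of coefficient vectors `δ` with `δ(Q(A)) ∈ ⟨Q(A)⟩`. -/
noncomputable def derMod (A : Arrangement K l) : Submodule (PolyS K l) (Fin l → PolyS K l) where
  carrier := {δ | (∑ i, δ i * pderiv i A.Q) ∈ Ideal.span {A.Q}}
  add_mem' := by
    intro a b ha hb
    simp only [Set.mem_setOf_eq, Pi.add_apply, add_mul, Finset.sum_add_distrib] at *
    exact Ideal.add_mem _ ha hb
  zero_mem' := by simp
  smul_mem' := by
    intro c a ha
    simp only [Set.mem_setOf_eq, Pi.smul_apply, smul_eq_mul, mul_assoc, ← Finset.mul_sum] at *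
    exact Ideal.mul_mem_left _ _ ha

/-- The submodule `D_0(A) = {δ : δ(Q(A)) = 0}`. -/
noncomputable def derMod0 (A : Arrangement K l) : Submodule (PolyS K l) (Fin l → PolyS K l) :=
  LinearMap.ker
    ((Fintype.bilinearCombination (PolyS K l) (PolyS K l)) fun i : Fin l => pderiv i A.Q)

/-- `A` is a free arrangement: `D(A)` is a free `S`-module. -/
def IsFreeArr (A : Arrangement K l) : Prop := Module.Free (PolyS K l) A.derMod

end Arrangement

/-- The graded maximal ideal `(x_1,...,x_l)` of `S`. -/
noncomputable def mIdeal (K : Type*) [Field K] (l : ℕ) : Ideal (PolyS K l) :=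
  Ideal.span (Set.range (MvPolynomial.X : Fin l → PolyS K l))

/-- A finite minimal free resolution of an `R`-module `M`, with minimality meaning
that all entries of the differentials lie in the ideal `m`; `b n` is the `n`-th
(total) Betti number, i.e. the rank of the `n`-th free module. -/
structure MinFreeRes (R : Type*) [CommRing R] (m : Ideal R)
    (M : Type*) [AddCommGroup M] [Module R M] (b : ℕ → ℕ) where
  len : ℕ
  aug : (Fin (b 0) → R) →ₗ[R] M
  d : (n : ℕ) → ((Fin (b (n + 1)) → R) →ₗ[R] (Fin (b n) → R))
  aug_surj : Function.Surjective aug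
  exact_aug : LinearMap.range (d 0) = LinearMap.ker aug
  exact : ∀ n, LinearMap.range (d (n + 1)) = LinearMap.ker (d n)
  minimal : ∀ n j i, d n (Pi.single j 1) i ∈ m
  finite : ∀ n, len < n → b n = 0

section JacobianIdeal

variable {k R ι : Type*} [CommSemiring k] [CommRing R] [Algebra k R]

def jacobianIdeal (D : ι → Derivation k R R) (f : R) : Ideal R :=
  Ideal.span ({f} ∪ Set.range fun i => D i f)

variable (D : ι → Derivation k R R)

lemma self_mem_jacobianIdeal (f : R) : f ∈ jacobianIdeal D f :=
  Ideal.subset_span (Or.inl rfl)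

lemma derivation_mem_jacobianIdeal (f : R) (i : ι) : D i f ∈ jacobianIdeal D f :=
  Ideal.subset_span (Or.inr ⟨i, rfl⟩)

lemma jacobianIdeal_mul_le (f u : R) : jacobianIdeal D (f * u) ≤ jacobianIdeal D f := by
  rw [jacobianIdeal, Ideal.span_le]
  rintro g (rfl | ⟨i, rfl⟩)
  · exact Ideal.mul_mem_right _ _ (self_mem_jacobianIdeal D f)
  · show D i (f * u) ∈ jacobianIdeal D f
    rw [Derivation.leibniz, smul_eq_mul, smul_eq_mul]
    exact add_mem (Ideal.mul_mem_right _ _ (self_mem_jacobianIdeal D f))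
      (Ideal.mul_mem_left _ _ (derivation_mem_jacobianIdeal D f i))

lemma map_jacobianIdeal_mul_of_isUnit {T : Type*} [CommRing T] (φ : R →+* T) (f : R)
    {u : R} (hu : IsUnit (φ u)) :
    (jacobianIdeal D (f * u)).map φ = (jacobianIdeal D f).map φ := by
  refine le_antisymm (Ideal.map_mono (jacobianIdeal_mul_le D f u)) ?_
  set I := (jacobianIdeal D (f * u)).map φ
  have hf : φ f ∈ I := by
    rw [← Ideal.mul_unit_mem_iff_mem I hu, ← map_mul]
    exact Ideal.mem_map_of_mem φ (self_mem_jacobianIdeal D _)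
  rw [Ideal.map_le_iff_le_comap, jacobianIdeal, Ideal.span_le]
  rintro g (rfl | ⟨i, rfl⟩)
  · exact hf
  · have leibniz : φ (D i f) * φ u = φ (D i (f * u)) - φ f * φ (D i u) := by
      rw [Derivation.leibniz, smul_eq_mul, smul_eq_mul, map_add, map_mul, map_mul]
      ring
    show φ (D i f) ∈ I
    rw [← Ideal.mul_unit_mem_iff_mem I hu, leibniz]
    exact sub_mem (Ideal.mem_map_of_mem φ (derivation_mem_jacobianIdeal D _ i))
      (Ideal.mul_mem_right _ _ hf)

end JacobianIdeal

namespace Arrangement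

variable {K : Type*} [Field K] {l : ℕ} (A : Arrangement K l) (X : Set (Fin l → K))

lemma jac_eq_jacobianIdeal : A.jac = jacobianIdeal (fun i => pderiv i) A.Q := rfl

lemma flatIdeal_le_ker_eval {v : Fin l → K} (hv : v ∈ X) :
    A.flatIdeal X ≤ RingHom.ker (eval v) :=
  Ideal.span_le.mpr fun _ hf => hf.2 hv

lemma notMem_flatIdeal_of_not_subset_zeroSet {f : PolyS K l} (hf : ¬X ⊆ zeroSet f) :
    f ∉ A.flatIdeal X := by
  obtain ⟨v, hvX, hvf⟩ := Set.not_subset.mp hf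
  exact fun hmem => hvf (A.flatIdeal_le_ker_eval X hvX hmem)

lemma exists_Q_eq_locArr_Q_mul [(A.flatIdeal X).IsPrime] :
    ∃ u ∈ (A.flatIdeal X).primeCompl, A.Q = (A.locArr X).Q * u := by
  classical
  refine ⟨∏ f ∈ A.forms with ¬X ⊆ zeroSet f, f, Submonoid.prod_mem _ fun f hf =>
    A.notMem_flatIdeal_of_not_subset_zeroSet X (Finset.mem_filter.mp hf).2, ?_⟩
  rw [Q, Q, locArr, ← Finset.prod_filter_mul_prod_filter_not A.forms (X ⊆ zeroSet ·)]

end Arrangement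

open Arrangement in
theorem jac_map_localization_eq_general {K : Type*} [Field K] {l : ℕ}
    (A : Arrangement K l) (X : Set (Fin l → K))
    [(A.flatIdeal X).IsPrime] :
    (A.jac).map (algebraMap (PolyS K l) (Localization.AtPrime (A.flatIdeal X))) =
      ((A.locArr X).jac).map
        (algebraMap (PolyS K l) (Localization.AtPrime (A.flatIdeal X))) := by
  obtain ⟨u, hu, hQ⟩ := A.exists_Q_eq_locArr_Q_mul X
  rw [jac_eq_jacobianIdeal, jac_eq_jacobianIdeal, hQ]
  exact map_jacobianIdeal_mul_of_isUnit _ _ _ (IsLocalization.map_units _ ⟨u, hu⟩)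

open Arrangement in
/-- For a central arrangement `A` and a flat `X` with prime ideal `I(X)`, the Jacobian
ideal of `A` and the Jacobian ideal of the localized arrangement `A_X` generate the same
ideal in the localized ring `S_{I(X)}`. -/
theorem jac_map_localization_eq {K : Type*} [Field K] [CharZero K] {l : ℕ}
    (A : Arrangement K l) (X : Set (Fin l → K)) (hX : A.IsFlat X)
    [(A.flatIdeal X).IsPrime] :
    (A.jac).map (algebraMap (PolyS K l) (Localization.AtPrime (A.flatIdeal X))) =
      ((A.locArr X).jac).map
        (algebraMap (PolyS K l) (Localization.AtPrime (A.flatIdeal X))) :=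
  jac_map_localization_eq_general A X
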